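/- Let R be a commutative ring, let k ≥ 2, let x_1, …, x_k be invertible elements of R with x̄_i := x_i^{−1}, let a = (a_1, a_2, …) be a sequence in R, and let m be any integer. Then h^{eo}_m((x_1,…,x_{k−1}),(x̄_1,…,x̄_{k−1})|a) − h^{eo}_m((x_2,…,x_k),(x̄_2,…,x̄_k)|a) = (x_1 + x̄_1 − x_k − x̄_k) · h^{eo}_{m−1}((x_1,…,x_k),(x̄_1,…,x̄_k)|a). (When k = 2 the two terms on the left are given by the n = 1 clause of the definition of h^{eo}.) -/

import Mathlib

open Finset

noncomputable def geom {R : Type*} [CommRing R] (x : R) : PowerSeries R :=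
  PowerSeries.mk fun k => x ^ k

noncomputable def lin {R : Type*} [CommRing R] (a : R) : PowerSeries R :=
  1 + PowerSeries.C a * PowerSeries.X

noncomputable def facpow {R : Type*} [CommRing R] (x : R) (a : ℕ → R) (m : ℕ) : R :=
  ∏ j ∈ Finset.range m, (x + a (j + 1))

noncomputable def hgl {R : Type*} [CommRing R] {n : ℕ} (x : Fin n → R) (a : ℕ → R) (m : ℤ) : R :=
  if 0 ≤ m then
    PowerSeries.coeff m.toNat
      ((∏ i, geom (x i)) * ∏ j ∈ Finset.range (n + m.toNat - 1), lin (a (j + 1)))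
  else 0

noncomputable def hsp {R : Type*} [CommRing R] {n : ℕ} (x : Fin n → Rˣ) (a : ℕ → R) (m : ℤ) : R :=
  if 0 ≤ m then
    PowerSeries.coeff m.toNat
      ((∏ i, geom ((x i : R)) * geom (((x i)⁻¹ : Rˣ) : R)) *
        ∏ j ∈ Finset.range (n + m.toNat - 1), lin (a (j + 1)))
  else 0

noncomputable def hoo {R : Type*} [CommRing R] {n : ℕ} (x : Fin n → Rˣ) (a : ℕ → R) (m : ℤ) : R :=
  if 0 ≤ m then
    PowerSeries.coeff m.toNat
      ((1 + PowerSeries.X) * (∏ i, geom ((x i : R)) * geom (((x i)⁻¹ : Rˣ) : R)) *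
        ∏ j ∈ Finset.range (n + m.toNat - 1), lin (a (j + 1)))
  else 0

noncomputable def heo {R : Type*} [CommRing R] {n : ℕ} (x : Fin n → Rˣ) (a : ℕ → R) (m : ℤ) : R :=
  if 0 ≤ m then
    if h : n = 1 then
      (PowerSeries.coeff m.toNat
        ((geom ((x ⟨0, by omega⟩ : Rˣ) : R) + geom (((x ⟨0, by omega⟩)⁻¹ : Rˣ) : R)) *
          ∏ j ∈ Finset.range m.toNat, lin (a (j + 1))))
        - (if m = 0 then 1 else 0)
    else
      PowerSeries.coeff m.toNat
        ((1 - PowerSeries.X ^ 2) * (∏ i, geom ((x i : R)) * geom (((x i)⁻¹ : Rˣ) : R)) *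
          ∏ j ∈ Finset.range (n + m.toNat - 1), lin (a (j + 1)))
  else 0

noncomputable def heod {R : Type*} [CommRing R] {n : ℕ} (x : Fin n → Rˣ) (a : ℕ → R) (m : ℤ) : R :=
  if 0 < m then
    if h : 0 < n then
      PowerSeries.coeff m.toNat
        ((geom ((x ⟨0, h⟩ : Rˣ) : R) - geom (((x ⟨0, h⟩)⁻¹ : Rˣ) : R)) *
          (∏ i ∈ Finset.univ.filter (fun i : Fin n => i ≠ ⟨0, h⟩),
            geom ((x i : R)) * geom (((x i)⁻¹ : Rˣ) : R)) *
          ∏ j ∈ Finset.range (n + m.toNat - 1), lin (a (j + 1)))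
    else 0
  else 0

/-!
Write `G(u) = 1 / ((1 - t u)(1 - t u⁻¹)) = 1 / (1 - (u + u⁻¹) t + t²)`. Comparing denominators
gives `G(u) - G(v) = (u + u⁻¹ - v - v⁻¹) t G(u) G(v)`. The two products on the left of the
recurrence share all factors except `G(x₁)` resp. `G(x_k)`, so their difference is
`(x₁ + x̄₁ - x_k - x̄_k) t ∏ᵢ G(xᵢ)`; extracting the coefficient of `t^m` gives the recurrence,
the factor `t` accounting for the shift `m ↦ m - 1`. For `k = 2` the same works because
`(1 - t u)⁻¹ + (1 - t u⁻¹)⁻¹ = 1 + (1 - t²) G(u)`.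
-/

section

open PowerSeries

variable {R : Type*} [CommRing R]

theorem geom_mul_one_sub (x : R) : geom x * (1 - C x * X) = 1 := by
  have h := congrArg (rescale x) (mk_one_mul_one_sub_eq_one (S := R))
  rw [map_mul, map_sub, map_one, rescale_X, rescale_mk] at h
  simpa only [geom, Pi.one_apply, mul_one] using h

noncomputable def geomPair (u : Rˣ) : PowerSeries R := geom (u : R) * geom ((u⁻¹ : Rˣ) : R)

theorem one_sub_mul_X_add_X_sq_mul_geomPair (u : Rˣ) :
    (1 - C ((u : R) + ((u⁻¹ : Rˣ) : R)) * X + X ^ 2) * geomPair u = 1 := by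
  have hC : C (u : R) * C ((u⁻¹ : Rˣ) : R) = 1 := by rw [← map_mul, Units.mul_inv, map_one]
  have h₁ := geom_mul_one_sub (u : R)
  have h₂ := geom_mul_one_sub ((u⁻¹ : Rˣ) : R)
  rw [geomPair, map_add]
  linear_combination (geom ((u⁻¹ : Rˣ) : R) * (1 - C ((u⁻¹ : Rˣ) : R) * X)) * h₁ + h₂
    - geom (u : R) * geom ((u⁻¹ : Rˣ) : R) * X ^ 2 * hC

theorem geomPair_sub_geomPair (u v : Rˣ) :
    geomPair u - geomPair v
      = C ((u : R) + ((u⁻¹ : Rˣ) : R) - (v : R) - ((v⁻¹ : Rˣ) : R)) * X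
        * (geomPair u * geomPair v) := by
  have hu := one_sub_mul_X_add_X_sq_mul_geomPair u
  have hv := one_sub_mul_X_add_X_sq_mul_geomPair v
  simp only [map_add, map_sub] at *
  linear_combination geomPair v * hu - geomPair u * hv

theorem geom_add_geom_inv (u : Rˣ) :
    geom (u : R) + geom ((u⁻¹ : Rˣ) : R) = 1 + (1 - X ^ 2) * geomPair u := by
  have h₁ := geom_mul_one_sub (u : R)
  have h₂ := geom_mul_one_sub ((u⁻¹ : Rˣ) : R)
  have hq := one_sub_mul_X_add_X_sq_mul_geomPair u
  rw [map_add] at hq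
  rw [geomPair] at *
  linear_combination (-geom (u : R)) * h₂ - geom ((u⁻¹ : Rˣ) : R) * h₁ + hq

theorem prod_geomPair_castSucc_sub_prod_geomPair_succ {n : ℕ} (x : Fin (n + 2) → Rˣ) :
    ∏ i : Fin (n + 1), geomPair (x i.castSucc) - ∏ i : Fin (n + 1), geomPair (x i.succ)
      = C ((x 0 : R) + ((x 0)⁻¹ : Rˣ) - (x (Fin.last _) : R) - ((x (Fin.last _))⁻¹ : Rˣ))
        * X * ∏ i, geomPair (x i) := by
  set M := ∏ i : Fin n, geomPair (x i.succ.castSucc)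
  have h₁ : ∏ i : Fin (n + 1), geomPair (x i.castSucc) = geomPair (x 0) * M :=
    Fin.prod_univ_succ _
  have h₂ : ∏ i : Fin (n + 1), geomPair (x i.succ) = M * geomPair (x (Fin.last _)) := by
    rw [Fin.prod_univ_castSucc]; rfl
  have h₃ : ∏ i, geomPair (x i) = geomPair (x 0) * M * geomPair (x (Fin.last _)) := by
    rw [Fin.prod_univ_succ, Fin.prod_univ_castSucc, mul_assoc]; rfl
  rw [h₁, h₂, h₃]
  linear_combination M * geomPair_sub_geomPair (x 0) (x (Fin.last _))

noncomputable def eoSeries {n : ℕ} (x : Fin n → Rˣ) : PowerSeries R :=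
  (1 - X ^ 2) * ∏ i, geomPair (x i)

noncomputable def linProd (a : ℕ → R) (N : ℕ) : PowerSeries R :=
  ∏ j ∈ range N, lin (a (j + 1))

theorem eoSeries_castSucc_sub_eoSeries_succ {n : ℕ} (x : Fin (n + 2) → Rˣ) :
    eoSeries (fun i : Fin (n + 1) => x i.castSucc) - eoSeries (fun i : Fin (n + 1) => x i.succ)
      = C ((x 0 : R) + ((x 0)⁻¹ : Rˣ) - (x (Fin.last _) : R) - ((x (Fin.last _))⁻¹ : Rˣ))
        * X * eoSeries x := by
  rw [eoSeries, eoSeries, eoSeries, ← mul_sub, prod_geomPair_castSucc_sub_prod_geomPair_succ]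
  ring

variable {n : ℕ} (a : ℕ → R) {m : ℤ}

theorem heo_of_ne_one (hn : n ≠ 1) (x : Fin n → Rˣ) (hm : 0 ≤ m) :
    heo x a m = coeff m.toNat (eoSeries x * linProd a (n + m.toNat - 1)) := by
  rw [heo, if_pos hm, dif_neg hn]
  rfl

theorem heo_of_fin_one (x : Fin 1 → Rˣ) (hm : 0 ≤ m) :
    heo x a m = coeff m.toNat ((1 + eoSeries x) * linProd a m.toNat) - if m = 0 then 1 else 0 := by
  rw [heo, if_pos hm, dif_pos rfl, geom_add_geom_inv, eoSeries, Fin.prod_univ_one]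
  rfl

theorem heo_sub_heo (x y : Fin n → Rˣ) (hm : 0 ≤ m) :
    heo x a m - heo y a m
      = coeff m.toNat ((eoSeries x - eoSeries y) * linProd a (n + m.toNat - 1)) := by
  by_cases hn : n = 1
  · subst hn
    rw [heo_of_fin_one a _ hm, heo_of_fin_one a _ hm, Nat.add_sub_cancel_left]
    simp only [add_mul, sub_mul, map_add, map_sub]
    ring
  · rw [heo_of_ne_one a hn _ hm, heo_of_ne_one a hn _ hm, sub_mul, map_sub]

theorem heo_sub_one (hn : n ≠ 1) (x : Fin n → Rˣ) (hm : 0 ≤ m) :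
    heo x a (m - 1) = coeff m.toNat (X * eoSeries x * linProd a (n + m.toNat - 2)) := by
  obtain ⟨j, rfl⟩ := Int.eq_ofNat_of_zero_le hm
  cases j with
  | zero => rw [heo, if_neg (by omega), Int.toNat_natCast, mul_assoc, coeff_zero_X_mul]
  | succ j =>
    rw [show ((j + 1 : ℕ) : ℤ) - 1 = j by omega, heo_of_ne_one a hn _ (Int.natCast_nonneg j),
      Int.toNat_natCast, Int.toNat_natCast, mul_assoc, coeff_succ_X_mul,
      show n + (j + 1) - 2 = n + j - 1 by omega]

end

/-- recurrence relation for `h^eo`. -/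
theorem heo_recurrence {R : Type*} [CommRing R] (k : ℕ) (hk : 2 ≤ k)
    (x : Fin k → Rˣ) (a : ℕ → R) (m : ℤ) :
    heo (fun i : Fin (k - 1) => x ⟨(i : ℕ), by have := i.isLt; omega⟩) a m
      - heo (fun i : Fin (k - 1) => x ⟨(i : ℕ) + 1, by have := i.isLt; omega⟩) a m =
    ((x ⟨0, by omega⟩ : R) + (((x ⟨0, by omega⟩)⁻¹ : Rˣ) : R)
        - (x ⟨k - 1, by omega⟩ : R) - (((x ⟨k - 1, by omega⟩)⁻¹ : Rˣ) : R)) *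
      heo x a (m - 1) := by
  rcases lt_or_ge m 0 with hm | hm
  · simp only [heo, if_neg (not_le.mpr hm), if_neg (show ¬ (0 : ℤ) ≤ m - 1 by omega),
      sub_zero, mul_zero]
  obtain ⟨n, rfl⟩ : ∃ n, k = n + 2 := ⟨k - 2, by omega⟩
  change heo (fun i : Fin (n + 1) => x i.castSucc) a m
      - heo (fun i : Fin (n + 1) => x i.succ) a m = _
  rw [heo_sub_heo a _ _ hm, eoSeries_castSucc_sub_eoSeries_succ, heo_sub_one a (by omega) _ hm,
    show n + 1 + m.toNat - 1 = n + 2 + m.toNat - 2 by omega, mul_assoc, mul_assoc,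
    PowerSeries.coeff_C_mul, ← mul_assoc]
  rfl
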